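/- Let T be an invertible real d×d matrix and θ, θ̃ skew-symmetric d×d matrices with θ̃ = T θ Tᵗ. Define U_T on L_2(ℝ^d) by (U_T f)(x) = f(T^{−1} x). Then U_T is bounded and invertible with inverse U_{T^{−1}}, and for every ξ ∈ ℝ^d, U_T^{−1} λ_{θ̃}(ξ) U_T = λ_θ(Tᵗ ξ). -/
import Mathlib


open Matrix

/-- The twisted regular representation unitary:
(λ_θ(ξ)g)(x) = e^{iξ·x} g(x − (θ/2)ξ). -/
noncomputable def lamTheta {d : ℕ} (θ : Matrix (Fin d) (Fin d) ℝ)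
    (ξ : Fin d → ℝ) (g : (Fin d → ℝ) → ℂ) : (Fin d → ℝ) → ℂ :=
  fun x => Complex.exp (Complex.I * (∑ i, ξ i * x i : ℝ))
    * g (x - (1 / 2 : ℝ) • θ.mulVec ξ)

/-- The change-of-variables operator (U_T f)(x) = f(T⁻¹ x). -/
noncomputable def changeVar {d : ℕ} (T : Matrix (Fin d) (Fin d) ℝ)
    (f : (Fin d → ℝ) → ℂ) : (Fin d → ℝ) → ℂ :=
  fun x => f (T⁻¹.mulVec x)

/-- For an invertible real matrix T and skew-symmetric θ, θ̃ with θ̃ = TθTᵗ,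
the operator U_T is invertible with inverse U_{T⁻¹}, and
U_T⁻¹ λ_{θ̃}(ξ) U_T = λ_θ(Tᵗξ). -/
theorem changeVar_intertwines {d : ℕ} (T : Matrix (Fin d) (Fin d) ℝ)
    (hT : IsUnit T.det)
    (θ θt : Matrix (Fin d) (Fin d) ℝ) (hθ : θᵀ = -θ) (hθt : θtᵀ = -θt)
    (htilde : θt = T * θ * Tᵀ) :
    (∀ f : (Fin d → ℝ) → ℂ, changeVar T (changeVar T⁻¹ f) = f)
    ∧ (∀ f : (Fin d → ℝ) → ℂ, changeVar T⁻¹ (changeVar T f) = f)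
    ∧ (∀ (f : (Fin d → ℝ) → ℂ) (ξ : Fin d → ℝ),
        changeVar T⁻¹ (lamTheta θt ξ (changeVar T f))
          = lamTheta θ (Tᵀ.mulVec ξ) f) := by
  have hinv : T⁻¹⁻¹ = T := T.nonsing_inv_nonsing_inv hT
  have hmul : T * T⁻¹ = 1 := T.mul_nonsing_inv hT
  have hmul' : T⁻¹ * T = 1 := T.nonsing_inv_mul hT
  refine ⟨fun f => ?_, fun f => ?_, fun f ξ => ?_⟩
  · funext x
    simp [changeVar, hinv, Matrix.mulVec_mulVec, hmul, Matrix.one_mulVec]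
  · funext x
    simp [changeVar, hinv, Matrix.mulVec_mulVec, hmul', Matrix.one_mulVec]
  · funext x
    have hdot : (∑ i, ξ i * T.mulVec x i) = ∑ i, Tᵀ.mulVec ξ i * x i := by
      have h := Matrix.dotProduct_mulVec ξ T x
      rw [← Matrix.mulVec_transpose] at h
      simpa [dotProduct] using h
    have harg : T⁻¹.mulVec (T.mulVec x - (1/2 : ℝ) • θt.mulVec ξ)
        = x - (1/2 : ℝ) • θ.mulVec (Tᵀ.mulVec ξ) := by
      have h1 : T⁻¹.mulVec (T.mulVec x) = x := by
        simp [Matrix.mulVec_mulVec, hmul', Matrix.one_mulVec]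
      have h2 : T⁻¹.mulVec (θt.mulVec ξ) = θ.mulVec (Tᵀ.mulVec ξ) := by
        simp [htilde, Matrix.mulVec_mulVec, ← Matrix.mul_assoc, hmul']
      rw [Matrix.mulVec_sub, Matrix.mulVec_smul, h1, h2]
    simp only [changeVar, lamTheta, hinv, harg, hdot]
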